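/- arXiv:1009.4152 — 9 statements merged into one kernel-verified Lean document; each statement's English description precedes it below -/
import Mathlib

section
/- Let X be a type, M = (X →₀ ℕ), and φ : M →+ M an additive monoid homomorphism. For all m, n ∈ M and i, j ∈ ℕ, the following are equivalent: (1) there exist p ∈ M and k ∈ ℕ with j = k + i and n = p + φ^[k] m (i.e., the monomial m·s^i left-divides n·s^j in the skew monomial monoid); (2) i ≤ j and φ^[j−i] m ≤ n in the pointwise order on M (i.e., σ^{j−i}(m) divides n). -/
theorem Nat.exists_eq_add_and_iff {P : ℕ → Prop} {i j : ℕ} :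
    (∃ k, j = k + i ∧ P k) ↔ i ≤ j ∧ P (j - i) := by
  constructor
  · rintro ⟨k, rfl, hk⟩
    simpa using hk
  · rintro ⟨hij, hP⟩
    exact ⟨j - i, (Nat.sub_add_cancel hij).symm, hP⟩

/-- **Left divisibility of monomials in the skew monomial monoid.**
The monomial `m·s^i` left-divides `n·s^j` iff `i ≤ j` and `σ^{j-i}(m)` divides `n`. -/
theorem skew_left_divides_iff {X : Type*} (φ : (X →₀ ℕ) →+ (X →₀ ℕ))
    (m n : X →₀ ℕ) (i j : ℕ) :
    (∃ (p : X →₀ ℕ) (k : ℕ), j = k + i ∧ n = p + (⇑φ)^[k] m) ↔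
      (i ≤ j ∧ (⇑φ)^[j - i] m ≤ n) := by
  rw [exists_comm]
  simp only [exists_and_left, ← le_iff_exists_add']
  exact Nat.exists_eq_add_and_iff
end

section
/- Let X be a type, M = (X →₀ ℕ), φ : M →+ M, and let ⋄ be the product on M × ℕ given by (m,i) ⋄ (n,j) = (m + φ^[i] n, i + j). Suppose ≺ is a strict linear order (irreflexive, transitive, total) on M × ℕ whose associated relation is well-founded and which is two-sidedly compatible with ⋄, i.e., u ≺ v implies p ⋄ u ⋄ q ≺ p ⋄ v ⋄ q for all u, v, p, q ∈ M × ℕ. Then: (a) for all m, n ∈ M, (m,0) ≺ (n,0) implies (φ m, 0) ≺ (φ n, 0) (σ is compatible with the restriction of ≺ to the monomials of P); and (b) for all m, n ∈ M and i, j ∈ ℕ, (m,i) ≺ (n,j) implies (m,0) ≺ (n,0) or i < j. -/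
/-!
Both statements come from two consequences of well-foundedness for a relation `r` that is
preserved by a map `f`: `f a` is never below `a` (a minimal counterexample `a` would make
`f a` a smaller one), and, if `r` is moreover a strict total order, `f` reflects `r`.
In `M × ℕ` the unit is `0`, right multiplication by `(0, k)` shifts the `ℕ`-coordinate by `k`,
and left multiplication by `(0, 1)` applies `φ`. Hence (a) follows by multiplying on the left by
`(0, 1)` and cancelling the shift by `1`; for (b), if `(n, 0) ≼ (m, 0)` and `j ≤ i`, shifting
by `j` would turn `(m, i) ≺ (n, j)` into the impossible `(m, j + (i - j)) ≺ (m, j)`.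
-/

/-- The product of the monomials of the skew polynomial ring `K[X][s;σ]`:
`(m,i)` represents `m·s^i` and `(m,i) ⋄ (n,j) = (m + φ^[i] n, i + j)`, where `φ` is the
exponent map of the monomial endomorphism `σ`. -/
noncomputable def skewMul {X : Type*} (φ : (X →₀ ℕ) →+ (X →₀ ℕ)) (u v : (X →₀ ℕ) × ℕ) : (X →₀ ℕ) × ℕ :=
  (u.1 + (⇑φ)^[u.2] v.1, u.2 + v.2)

section SkewMul

variable {X : Type*} (φ : (X →₀ ℕ) →+ (X →₀ ℕ))

@[simp]
theorem zero_skewMul (u : (X →₀ ℕ) × ℕ) : skewMul φ 0 u = u := by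
  simp [skewMul]

@[simp]
theorem skewMul_zero (u : (X →₀ ℕ) × ℕ) : skewMul φ u 0 = u := by
  simp [skewMul, Function.iterate_fixed (map_zero φ)]

theorem skewMul_zero_right (m : X →₀ ℕ) (i k : ℕ) : skewMul φ (m, i) (0, k) = (m, i + k) := by
  simp [skewMul, Function.iterate_fixed (map_zero φ)]

theorem zero_one_skewMul (m : X →₀ ℕ) (i : ℕ) : skewMul φ (0, 1) (m, i) = (φ m, 1 + i) := by
  simp [skewMul]

end SkewMul

namespace WellFounded

variable {α : Type*} {r : α → α → Prop} {f : α → α}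

theorem not_rel_map_self (hwf : WellFounded r) (hf : ∀ a b, r a b → r (f a) (f b)) (a : α) :
    ¬ r (f a) a :=
  hwf.induction (C := fun a => ¬ r (f a) a) a fun a ih h => ih (f a) h (hf _ _ h)

theorem rel_of_map_rel (hwf : WellFounded r) (htrans : ∀ a b c, r a b → r b c → r a c)
    (htotal : ∀ a b, a ≠ b → r a b ∨ r b a) (hf : ∀ a b, r a b → r (f a) (f b)) {a b : α}
    (h : r (f a) (f b)) : r a b := by
  have hirr : ∀ c, ¬ r c c := hwf.not_rel_map_self (f := id) fun _ _ => id
  rcases eq_or_ne a b with rfl | hne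
  · exact absurd h (hirr _)
  · exact (htotal a b hne).resolve_right fun hba => hirr _ (htrans _ _ _ h (hf _ _ hba))

end WellFounded

theorem skew_monomial_order_restrict_general {X : Type*} (φ : (X →₀ ℕ) →+ (X →₀ ℕ))
    (r : ((X →₀ ℕ) × ℕ) → ((X →₀ ℕ) × ℕ) → Prop)
    (htrans : ∀ u v w, r u v → r v w → r u w)
    (htotal : ∀ u v, u ≠ v → r u v ∨ r v u)
    (hwf : WellFounded r)
    (hcompat : ∀ u v p q, r u v → r (skewMul φ p (skewMul φ u q)) (skewMul φ p (skewMul φ v q))) :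
    (∀ m n : X →₀ ℕ, r (m, 0) (n, 0) → r (φ m, 0) (φ n, 0)) ∧
      (∀ (m n : X →₀ ℕ) (i j : ℕ), r (m, i) (n, j) → r (m, 0) (n, 0) ∨ i < j) := by
  have hshift : ∀ k u v, r u v → r (skewMul φ u (0, k)) (skewMul φ v (0, k)) := fun k u v h => by
    simpa only [zero_skewMul] using hcompat u v 0 (0, k) h
  refine ⟨fun m n h => ?_, fun m n i j h => ?_⟩
  · have h1 : r (φ m, 1) (φ n, 1) := by
      simpa only [skewMul_zero, zero_one_skewMul] using hcompat _ _ (0, 1) 0 h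
    refine hwf.rel_of_map_rel htrans htotal (hshift 1) ?_
    simpa only [skewMul_zero_right, zero_add] using h1
  · by_contra! ⟨hmn, hji⟩
    obtain ⟨k, rfl⟩ := Nat.exists_eq_add_of_le hji
    have hdescent : r (m, j + k) (m, j) := by
      rcases eq_or_ne m n with rfl | hne
      · exact h
      · have hnm := (htotal (m, 0) (n, 0) (by simpa using hne)).resolve_left hmn
        have := hshift j _ _ hnm
        simp only [skewMul_zero_right, zero_add] at this
        exact htrans _ _ _ h this
    exact hwf.not_rel_map_self (hshift k) (m, j) (by rwa [skewMul_zero_right])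

/-- **(Proposition `toS2P`.)** Any monomial ordering of the skew polynomial ring restricts to
a monomial ordering of `P` with which `σ` is compatible; moreover `m·s^i ≺ n·s^j` implies
`m ≺ n` or `i < j`. -/
theorem skew_monomial_order_restrict {X : Type*} (φ : (X →₀ ℕ) →+ (X →₀ ℕ))
    (r : ((X →₀ ℕ) × ℕ) → ((X →₀ ℕ) × ℕ) → Prop)
    (hirr : ∀ u, ¬ r u u)
    (htrans : ∀ u v w, r u v → r v w → r u w)
    (htotal : ∀ u v, u ≠ v → r u v ∨ r v u)
    (hwf : WellFounded r)
    (hcompat : ∀ u v p q, r u v → r (skewMul φ p (skewMul φ u q)) (skewMul φ p (skewMul φ v q))) :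
    (∀ m n : X →₀ ℕ, r (m, 0) (n, 0) → r (φ m, 0) (φ n, 0)) ∧
      (∀ (m n : X →₀ ℕ) (i j : ℕ), r (m, i) (n, j) → r (m, 0) (n, 0) ∨ i < j) :=
  skew_monomial_order_restrict_general φ r htrans htotal hwf hcompat
end

section
/- Let m be a monomial order on X →₀ ℕ and let φ : (X →₀ ℕ) →+ (X →₀ ℕ) be compatible with m, i.e., m.toSyn d < m.toSyn e implies m.toSyn (φ d) < m.toSyn (φ e). Define the relation ≺' on (X →₀ ℕ) × ℕ by (d,i) ≺' (e,j) iff i < j, or i = j and m.toSyn d < m.toSyn e. Then ≺' is well-founded and is two-sidedly compatible with the skew product ⋄, i.e., u ≺' v implies p ⋄ u ⋄ q ≺' p ⋄ v ⋄ q for all u, v, p, q, where (d,i) ⋄ (e,j) = (d + φ^[i] e, i + j). Hence ≺' is a monomial ordering of the skew polynomial ring extending the given monomial order on P. -/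
/-- The extension `≺'` of a monomial order `m` on `P` to the monomials of the skew polynomial
ring: `(d,i) ≺' (e,j)` iff `i < j`, or `i = j` and `d ≺[m] e`. -/
def skewLt {X : Type*} (m : MonomialOrder X) (u v : (X →₀ ℕ) × ℕ) : Prop :=
  u.2 < v.2 ∨ (u.2 = v.2 ∧ m.toSyn u.1 < m.toSyn v.1)

/-! `≺'` is the pullback of the lexicographic order on `ℕ × m.syn` along `(d, i) ↦ (i, d)`,
hence well-founded. For compatibility it suffices to multiply on each side separately: on the
right both exponents gain the same summand `φ^[i] e`, while on the left they become `φ^[k] d`,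
which is where the compatibility of `φ` (iterated) is needed. -/

namespace MonomialOrder

variable {X : Type*} (m : MonomialOrder X)

theorem toSyn_iterate_lt_of_lt {φ : (X →₀ ℕ) → (X →₀ ℕ)}
    (hφ : ∀ d e : X →₀ ℕ, m.toSyn d < m.toSyn e → m.toSyn (φ d) < m.toSyn (φ e))
    (k : ℕ) {d e : X →₀ ℕ} (h : m.toSyn d < m.toSyn e) :
    m.toSyn (φ^[k] d) < m.toSyn (φ^[k] e) := by
  induction k with
  | zero => exact h
  | succ k ih =>
    rw [Function.iterate_succ_apply', Function.iterate_succ_apply']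
    exact hφ _ _ ih

theorem wellFounded_skewLt : WellFounded (skewLt m) := by
  refine Subrelation.wf ?_ <|
    InvImage.wf (fun u => (u.2, m.toSyn u.1)) (wellFounded_lt.prod_lex wellFounded_lt)
  intro u v h
  exact Prod.lex_def.mpr h

variable {m} (φ : (X →₀ ℕ) →+ (X →₀ ℕ))

theorem skewLt_skewMul_right {u v : (X →₀ ℕ) × ℕ} (h : skewLt m u v) (q : (X →₀ ℕ) × ℕ) :
    skewLt m (skewMul φ u q) (skewMul φ v q) := by
  rcases h with h | ⟨heq, h⟩
  · exact Or.inl (Nat.add_lt_add_right h _)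
  · refine Or.inr ⟨congrArg (· + q.2) heq, ?_⟩
    simp only [skewMul, heq, map_add]
    exact add_lt_add_left h _

theorem skewLt_skewMul_left
    (hφ : ∀ d e : X →₀ ℕ, m.toSyn d < m.toSyn e → m.toSyn (φ d) < m.toSyn (φ e))
    (p : (X →₀ ℕ) × ℕ) {u v : (X →₀ ℕ) × ℕ} (h : skewLt m u v) :
    skewLt m (skewMul φ p u) (skewMul φ p v) := by
  rcases h with h | ⟨heq, h⟩
  · exact Or.inl (Nat.add_lt_add_left h _)
  · refine Or.inr ⟨congrArg (p.2 + ·) heq, ?_⟩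
    simp only [skewMul, map_add]
    exact add_lt_add_right (m.toSyn_iterate_lt_of_lt hφ p.2 h) _

end MonomialOrder

/-- **(Proposition `toP2S`.)** If `φ` is compatible with the monomial order `m` of `P`, then
the extended ordering `≺'` is a monomial ordering of the skew polynomial ring: it is
well-founded and two-sidedly compatible with the skew product `⋄`. -/
theorem skewLt_isMonomialOrdering {X : Type*} (m : MonomialOrder X)
    (φ : (X →₀ ℕ) →+ (X →₀ ℕ))
    (hφ : ∀ d e : X →₀ ℕ, m.toSyn d < m.toSyn e → m.toSyn (φ d) < m.toSyn (φ e)) :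
    WellFounded (skewLt m) ∧
      ∀ u v p q, skewLt m u v →
        skewLt m (skewMul φ p (skewMul φ u q)) (skewMul φ p (skewMul φ v q)) :=
  ⟨m.wellFounded_skewLt, fun _ _ p q h =>
    MonomialOrder.skewLt_skewMul_left φ hφ p (MonomialOrder.skewLt_skewMul_right φ h q)⟩
end

section
/- Let X be a type, M = (X →₀ ℕ), and φ : M →+ M an additive monoid homomorphism. The following are equivalent: (a) for all i ≠ j in X, the supports of φ (Finsupp.single i 1) and φ (Finsupp.single j 1) are disjoint (i.e., gcd(σ(x_i), σ(x_j)) = 1 for the corresponding monomial endomorphism σ); (b) for all m, n ∈ M, φ (m ⊓ n) = φ m ⊓ φ n, where ⊓ is the pointwise minimum (i.e., gcd(σ(m), σ(n)) = σ(gcd(m,n)) for all monomials m, n). -/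
/-!
Disjointness of the images of the variables means that each coordinate `k` of `φ m` is fed by
at most one variable `i`, so `m ↦ φ m k` is `m ↦ m i * c` for a constant `c`, and multiplication
by `c` commutes with `min`. Conversely `xᵢ ⊓ xⱼ = 0` for `i ≠ j`, so preservation of `⊓` forces
`φ xᵢ ⊓ φ xⱼ = φ 0 = 0`.
-/

namespace Finsupp

variable {X Y : Type*}

theorem addHom_apply_eq_smul_of_map_single_eq_zero {M : Type*} [AddCommMonoid M]
    (ψ : (X →₀ ℕ) →+ M) {i : X} (h : ∀ j ≠ i, ψ (single j 1) = 0) (m : X →₀ ℕ) :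
    ψ m = m i • ψ (single i 1) := by
  suffices ψ = (multiplesHom M (ψ (single i 1))).comp (applyAddHom i) from
    DFunLike.congr_fun this m
  ext j
  by_cases hji : j = i
  · subst hji
    simp
  · simp [h j hji, single_eq_of_ne' hji]

theorem addHom_map_inf_of_map_single_eq_zero (ψ : (X →₀ ℕ) →+ ℕ) {i : X}
    (h : ∀ j ≠ i, ψ (single j 1) = 0) (m n : X →₀ ℕ) :
    ψ (m ⊓ n) = min (ψ m) (ψ n) := by
  rw [addHom_apply_eq_smul_of_map_single_eq_zero ψ h (m ⊓ n),
    addHom_apply_eq_smul_of_map_single_eq_zero ψ h m,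
    addHom_apply_eq_smul_of_map_single_eq_zero ψ h n, inf_apply]
  exact min_mul_of_nonneg _ _ (Nat.zero_le _)

theorem exists_forall_ne_apply_eq_zero {ι : Type*} [Nonempty ι] {f : ι → X →₀ ℕ}
    (hf : Pairwise fun i j => Disjoint (f i) (f j)) (k : X) :
    ∃ i, ∀ j ≠ i, f j k = 0 := by
  by_cases hk : ∃ i, f i k ≠ 0
  · obtain ⟨i, hi⟩ := hk
    refine ⟨i, fun j hji => ?_⟩
    by_contra hj
    exact Finset.disjoint_left.mp (Finsupp.disjoint_iff.mp (hf hji))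
      (mem_support_iff.mpr hj) (mem_support_iff.mpr hi)
  · push Not at hk
    exact ⟨Classical.arbitrary ι, fun j _ => hk j⟩

theorem map_inf_of_pairwise_disjoint (φ : (X →₀ ℕ) →+ (Y →₀ ℕ))
    (hφ : Pairwise fun i j => Disjoint (φ (single i 1)) (φ (single j 1))) (m n : X →₀ ℕ) :
    φ (m ⊓ n) = φ m ⊓ φ n := by
  cases isEmpty_or_nonempty X
  · simp [Subsingleton.elim m 0, Subsingleton.elim n 0]
  ext k
  obtain ⟨i, hi⟩ := exists_forall_ne_apply_eq_zero hφ k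
  exact addHom_map_inf_of_map_single_eq_zero ((applyAddHom k).comp φ) hi m n

theorem pairwise_disjoint_of_map_inf (φ : (X →₀ ℕ) →+ (Y →₀ ℕ))
    (hφ : ∀ m n : X →₀ ℕ, φ (m ⊓ n) = φ m ⊓ φ n) :
    Pairwise fun i j => Disjoint (φ (single i 1)) (φ (single j 1)) := by
  intro i j hij
  have hsingle : Disjoint (single i 1 : X →₀ ℕ) (single j 1) :=
    Finsupp.disjoint_iff.mpr (by simp [hij])
  rw [_root_.disjoint_iff, ← hφ, _root_.disjoint_iff.mp hsingle, bot_eq_zero, map_zero, bot_eq_zero]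

end Finsupp

/-- **(Proposition `divcompat`, (a) ⇔ (b).)** For the exponent map `φ` of a monomial
endomorphism `σ` of `K[X]`, the images of distinct variables have disjoint supports
(`gcd(σ(x_i), σ(x_j)) = 1` for `i ≠ j`) if and only if `φ` preserves pointwise minima
(`gcd(σ(m), σ(n)) = σ(gcd(m, n))` for all monomials `m, n`). -/
theorem gcd_compatible_iff {X : Type*} (φ : (X →₀ ℕ) →+ (X →₀ ℕ)) :
    (∀ i j : X, i ≠ j →
        Disjoint (φ (Finsupp.single i 1)).support (φ (Finsupp.single j 1)).support) ↔
      (∀ m n : X →₀ ℕ, φ (m ⊓ n) = φ m ⊓ φ n) := by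
  simp only [← Finsupp.disjoint_iff]
  exact ⟨fun h => Finsupp.map_inf_of_pairwise_disjoint φ fun i j => h i j,
    fun h _ _ hij => Finsupp.pairwise_disjoint_of_map_inf φ h hij⟩
end

section
/- Let X be a type, M = (X →₀ ℕ), and φ : M →+ M an additive monoid homomorphism such that for all i ≠ j in X the supports of φ (Finsupp.single i 1) and φ (Finsupp.single j 1) are disjoint, and φ (Finsupp.single i 1) ≠ 0 for every i ∈ X. Then for all m, n ∈ M: (i) m ≤ n if and only if φ m ≤ φ n (in the pointwise order, i.e., m divides n iff σ(m) divides σ(n)); and (ii) φ (m ⊔ n) = φ m ⊔ φ n, where ⊔ is the pointwise maximum (i.e., lcm(σ(m), σ(n)) = σ(lcm(m,n))). -/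
/-!
Write `φᵢ := φ (single i 1)`. Since `φ f = ∑ᵢ f i • φᵢ` and the `φᵢ` have pairwise disjoint
supports, on the support of `φᵢ` the coordinate `(φ f) k` equals `f i * φᵢ k`, and off the union
of these supports it vanishes. So every coordinate of `φ f` is either `0` or a fixed multiple of
a single coordinate of `f`; multiplication by a constant commutes with `max`, giving the `⊔`
identity. As every `φᵢ ≠ 0`, each coordinate of `f` appears this way with a positive factor, so
`φ` reflects `≤`.
-/

open Finsupp Function

theorem AddMonoidHom.monotone_of_canonicallyOrderedAdd {M N : Type*} [AddCommMonoid M]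
    [PartialOrder M] [CanonicallyOrderedAdd M] [AddCommMonoid N] [PartialOrder N]
    [CanonicallyOrderedAdd N] (φ : M →+ N) : Monotone φ := by
  intro m n h
  obtain ⟨c, rfl⟩ := le_iff_exists_add.mp h
  rw [map_add]
  exact le_self_add

section

variable {X : Type*} (φ : (X →₀ ℕ) →+ (X →₀ ℕ))

theorem AddMonoidHom.finsupp_apply_eq_sum (f : X →₀ ℕ) (k : X) :
    φ f k = ∑ j ∈ f.support, f j * φ (Finsupp.single j 1) k := by
  conv_lhs => rw [← f.sum_single]
  rw [map_finsuppSum, Finsupp.sum_apply, Finsupp.sum]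
  refine Finset.sum_congr rfl fun j _ => ?_
  rw [← smul_single_one, map_nsmul, Finsupp.smul_apply, smul_eq_mul]

theorem AddMonoidHom.exists_mem_support_single_of_apply_ne_zero {f : X →₀ ℕ} {k : X}
    (h : φ f k ≠ 0) : ∃ i, k ∈ (φ (Finsupp.single i 1)).support := by
  rw [φ.finsupp_apply_eq_sum] at h
  obtain ⟨j, -, hj⟩ := Finset.exists_ne_zero_of_sum_ne_zero h
  exact ⟨j, mem_support_iff.mpr (right_ne_zero_of_mul hj)⟩

theorem AddMonoidHom.finsupp_apply_eq_mul_of_mem_support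
    (hdisj : Pairwise (Disjoint on fun i => (φ (Finsupp.single i 1)).support))
    (f : X →₀ ℕ) {i k : X} (hk : k ∈ (φ (Finsupp.single i 1)).support) :
    φ f k = f i * φ (Finsupp.single i 1) k := by
  rw [φ.finsupp_apply_eq_sum]
  refine Finset.sum_eq_single i (fun j _ hji => ?_) (fun hi => ?_)
  · rw [notMem_support_iff.mp (Finset.disjoint_right.mp (hdisj hji) hk), mul_zero]
  · rw [notMem_support_iff.mp hi, zero_mul]

theorem AddMonoidHom.finsupp_le_of_map_le
    (hdisj : Pairwise (Disjoint on fun i => (φ (Finsupp.single i 1)).support))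
    (hne : ∀ i : X, φ (Finsupp.single i 1) ≠ 0) {m n : X →₀ ℕ} (h : φ m ≤ φ n) : m ≤ n := by
  intro i
  obtain ⟨k, hk⟩ := support_nonempty_iff.mpr (hne i)
  have hmn := h k
  rw [φ.finsupp_apply_eq_mul_of_mem_support hdisj m hk,
    φ.finsupp_apply_eq_mul_of_mem_support hdisj n hk] at hmn
  exact Nat.le_of_mul_le_mul_right hmn (Nat.pos_of_ne_zero (mem_support_iff.mp hk))

theorem AddMonoidHom.finsupp_map_sup
    (hdisj : Pairwise (Disjoint on fun i => (φ (Finsupp.single i 1)).support))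
    (m n : X →₀ ℕ) : φ (m ⊔ n) = φ m ⊔ φ n := by
  ext k
  rw [sup_apply]
  by_cases hk : ∃ i, k ∈ (φ (Finsupp.single i 1)).support
  · obtain ⟨i, hk⟩ := hk
    rw [φ.finsupp_apply_eq_mul_of_mem_support hdisj (m ⊔ n) hk, sup_apply,
      φ.finsupp_apply_eq_mul_of_mem_support hdisj m hk,
      φ.finsupp_apply_eq_mul_of_mem_support hdisj n hk]
    exact max_mul_of_nonneg _ _ (Nat.zero_le _)
  · have hzero (f : X →₀ ℕ) : φ f k = 0 :=
      not_not.mp fun h => hk (φ.exists_mem_support_single_of_apply_ne_zero h)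
    rw [hzero, hzero, hzero, max_self]

end

/-- **(Proposition `divcompat`, consequences.)** If the exponent map `φ` of a monomial
endomorphism `σ` of `K[X]` sends distinct variables to monomials with disjoint supports and
no variable to `1`, then `m` divides `n` iff `σ(m)` divides `σ(n)`, and
`lcm(σ(m), σ(n)) = σ(lcm(m, n))`: `σ` is a lattice homomorphism for divisibility. -/
theorem divisibility_lattice_hom {X : Type*} (φ : (X →₀ ℕ) →+ (X →₀ ℕ))
    (hdisj : ∀ i j : X, i ≠ j →
      Disjoint (φ (Finsupp.single i 1)).support (φ (Finsupp.single j 1)).support)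
    (hne : ∀ i : X, φ (Finsupp.single i 1) ≠ 0) :
    ∀ m n : X →₀ ℕ, (m ≤ n ↔ φ m ≤ φ n) ∧ φ (m ⊔ n) = φ m ⊔ φ n :=
  have hdisj' : Pairwise (Disjoint on fun i => (φ (Finsupp.single i 1)).support) :=
    fun i j => hdisj i j
  fun m n =>
    ⟨⟨fun h => φ.monotone_of_canonicallyOrderedAdd h, φ.finsupp_le_of_map_le hdisj' hne⟩,
      φ.finsupp_map_sup hdisj' m n⟩
end

section
/- Let K be a field, m a monomial order on X →₀ ℕ, φ : (X →₀ ℕ) →+ (X →₀ ℕ) an additive homomorphism that is compatible with m (m.toSyn d < m.toSyn e implies m.toSyn (φ d) < m.toSyn (φ e)) and compatible with lcm (φ (d ⊔ e) = φ d ⊔ φ e for all d, e), and let σ : MvPolynomial X K →ₐ[K] MvPolynomial X K be the K-algebra endomorphism with σ (monomial d c) = monomial (φ d) c for all d and c. For nonzero f, g ∈ MvPolynomial X K define l = m.degree f ⊔ m.degree g and spoly(f,g) = (m.leadingCoeff f)⁻¹ • (monomial (l − m.degree f) 1) * f − (m.leadingCoeff g)⁻¹ • (monomial (l − m.degree g)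 1) * g. Then for all nonzero f, g: σ (spoly(f,g)) = spoly(σ f, σ g). -/
/-!
`σ` acts on coefficients as `mapDomain φ`. A map `φ` that is strictly monotone for `m` is
injective, so `σ` sends the leading term of `f` to the leading term of `σ f`:
`deg (σ f) = φ (deg f)` and `lc (σ f) = lc f`. Being additive, `φ` commutes with the truncated
subtraction `l - deg f` since `deg f ≤ l`, and compatibility with `⊔` gives
`φ l = deg (σ f) ⊔ deg (σ g)`. Hence `σ` maps each term of `spoly f g` to the corresponding term
of `spoly (σ f) (σ g)`.
-/

variable {X K : Type*} [Field K]

/-- The leading exponent (degree) of a multivariate polynomial with respect to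
a monomial order `m`. -/
noncomputable def MonomialOrder.mvDegree (m : MonomialOrder X) (f : MvPolynomial X K) :
    X →₀ ℕ :=
  m.toSyn.symm (f.support.sup m.toSyn)

/-- The leading coefficient of a multivariate polynomial with respect to
a monomial order `m`. -/
noncomputable def MonomialOrder.mvLeadingCoeff (m : MonomialOrder X) (f : MvPolynomial X K) :
    K :=
  f.coeff (m.mvDegree f)

/-- The S-polynomial of `f` and `g` with respect to a monomial order `m`:
`spoly(f,g) = lc(f)⁻¹·(l/lm(f))·f − lc(g)⁻¹·(l/lm(g))·g` where `l = lcm(lm(f), lm(g))`. -/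
noncomputable def MonomialOrder.spoly (m : MonomialOrder X) (f g : MvPolynomial X K) :
    MvPolynomial X K :=
  (m.mvLeadingCoeff f)⁻¹ •
      (MvPolynomial.monomial (m.mvDegree f ⊔ m.mvDegree g - m.mvDegree f) (1 : K)) * f -
    (m.mvLeadingCoeff g)⁻¹ •
      (MvPolynomial.monomial (m.mvDegree f ⊔ m.mvDegree g - m.mvDegree g) (1 : K)) * g

open MvPolynomial
open scoped MonomialOrder

namespace MonomialOrder

lemma mvDegree_eq_degree (m : MonomialOrder X) (f : MvPolynomial X K) :
    m.mvDegree f = m.degree f :=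
  rfl

lemma mvLeadingCoeff_eq_leadingCoeff (m : MonomialOrder X) (f : MvPolynomial X K) :
    m.mvLeadingCoeff f = m.leadingCoeff f :=
  rfl

section StrictMono

variable (m : MonomialOrder X) {φ : (X →₀ ℕ) → (X →₀ ℕ)}
  (hφ : ∀ d e : X →₀ ℕ, d ≺[m] e → φ d ≺[m] φ e)
include hφ

lemma injective_of_toSyn_strictMono : Function.Injective φ := by
  intro d e h
  rcases lt_trichotomy (m.toSyn d) (m.toSyn e) with hde | hde | hde
  · exact absurd (congrArg m.toSyn h) (hφ d e hde).ne
  · exact m.toSyn.injective hde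
  · exact absurd (congrArg m.toSyn h) (hφ e d hde).ne'

lemma map_le_map_of_toSyn_strictMono {d e : X →₀ ℕ} (hde : d ≼[m] e) : φ d ≼[m] φ e := by
  rcases hde.lt_or_eq with hlt | heq
  · exact (hφ d e hlt).le
  · rw [m.toSyn.injective heq]

end StrictMono

end MonomialOrder

section MonomialMap

variable {R F : Type*} [CommSemiring R]
  [FunLike F (MvPolynomial X R) (MvPolynomial X R)] [AddMonoidHomClass F _ _]
  {φ : (X →₀ ℕ) →+ (X →₀ ℕ)} {σ : F}
  (hσ : ∀ (d : X →₀ ℕ) (c : R), σ (monomial d c) = monomial (φ d) c)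
include hσ

lemma MvPolynomial.eq_mapDomain_of_map_monomial (p : MvPolynomial X R) :
    σ p = AddMonoidAlgebra.mapDomain φ p := by
  induction p using MvPolynomial.induction_on' with
  | monomial d c =>
    rw [hσ, ← single_eq_monomial, ← single_eq_monomial, AddMonoidAlgebra.mapDomain_single]
  | add p q hp hq => rw [map_add, hp, hq, AddMonoidAlgebra.mapDomain_add]

lemma MvPolynomial.coeff_map_of_map_monomial (hφ : Function.Injective φ)
    (p : MvPolynomial X R) (d : X →₀ ℕ) : (σ p).coeff (φ d) = p.coeff d := by
  rw [eq_mapDomain_of_map_monomial hσ]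
  exact Finsupp.mapDomain_apply hφ (AddMonoidAlgebra.coeff p) d

lemma MvPolynomial.support_map_of_map_monomial [DecidableEq X] (hφ : Function.Injective φ)
    (p : MvPolynomial X R) : (σ p).support = p.support.image φ := by
  rw [eq_mapDomain_of_map_monomial hσ]
  exact Finsupp.mapDomain_support_of_injective hφ (AddMonoidAlgebra.coeff p)

variable (m : MonomialOrder X) (hφ : ∀ d e : X →₀ ℕ, d ≺[m] e → φ d ≺[m] φ e)
include hφ

lemma MonomialOrder.degree_map_of_map_monomial (p : MvPolynomial X R) :
    m.degree (σ p) = φ (m.degree p) := by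
  classical
  have hinj := m.injective_of_toSyn_strictMono hφ
  rcases eq_or_ne p 0 with rfl | hp
  · rw [map_zero, degree_zero, map_zero]
  have hmem : φ (m.degree p) ∈ (σ p).support := by
    rw [support_map_of_map_monomial hσ hinj]
    exact Finset.mem_image_of_mem φ (m.degree_mem_support hp)
  have hle : m.degree (σ p) ≼[m] φ (m.degree p) := by
    rw [degree_le_iff, support_map_of_map_monomial hσ hinj]
    intro c hc
    obtain ⟨d, hd, rfl⟩ := Finset.mem_image.mp hc
    exact m.map_le_map_of_toSyn_strictMono hφ (m.le_degree hd)
  exact m.toSyn.injective (le_antisymm hle (m.le_degree hmem))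

lemma MonomialOrder.leadingCoeff_map_of_map_monomial (p : MvPolynomial X R) :
    m.leadingCoeff (σ p) = m.leadingCoeff p := by
  rw [leadingCoeff, m.degree_map_of_map_monomial hσ hφ,
    coeff_map_of_map_monomial hσ (m.injective_of_toSyn_strictMono hφ)]
  rfl

end MonomialMap

theorem spoly_map_general (m : MonomialOrder X) (φ : (X →₀ ℕ) →+ (X →₀ ℕ))
    (hφ : ∀ d e : X →₀ ℕ, m.toSyn d < m.toSyn e → m.toSyn (φ d) < m.toSyn (φ e))
    (hlcm : ∀ d e : X →₀ ℕ, φ (d ⊔ e) = φ d ⊔ φ e)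
    (σ : MvPolynomial X K →ₐ[K] MvPolynomial X K)
    (hσ : ∀ (d : X →₀ ℕ) (c : K), σ (MvPolynomial.monomial d c) = MvPolynomial.monomial (φ d) c)
    (f g : MvPolynomial X K) :
    σ (m.spoly f g) = m.spoly (σ f) (σ g) := by
  have hdeg := m.degree_map_of_map_monomial hσ hφ
  have hlc := m.leadingCoeff_map_of_map_monomial hσ hφ
  simp only [MonomialOrder.spoly, MonomialOrder.mvDegree_eq_degree,
    MonomialOrder.mvLeadingCoeff_eq_leadingCoeff]
  rw [map_sub, map_mul, map_mul, map_smul, map_smul, hσ, hσ, hdeg, hdeg, hlc, hlc,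
    ← map_tsub_of_le φ _ _ le_sup_left, ← map_tsub_of_le φ _ _ le_sup_right, hlcm]

/-- **(Lemma `sigmaspoly`, commutative core.)** If the monomial endomorphism `σ` of
`K[X]` (with exponent map `φ`) is compatible with the monomial order and with lcm's,
then `σ(spoly(f,g)) = spoly(σ f, σ g)` for all nonzero `f, g`. -/
theorem spoly_map (m : MonomialOrder X) (φ : (X →₀ ℕ) →+ (X →₀ ℕ))
    (hφ : ∀ d e : X →₀ ℕ, m.toSyn d < m.toSyn e → m.toSyn (φ d) < m.toSyn (φ e))
    (hlcm : ∀ d e : X →₀ ℕ, φ (d ⊔ e) = φ d ⊔ φ e)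
    (σ : MvPolynomial X K →ₐ[K] MvPolynomial X K)
    (hσ : ∀ (d : X →₀ ℕ) (c : K), σ (MvPolynomial.monomial d c) = MvPolynomial.monomial (φ d) c)
    (f g : MvPolynomial X K) (hf : f ≠ 0) (hg : g ≠ 0) :
    σ (m.spoly f g) = m.spoly (σ f) (σ g) :=
  spoly_map_general m φ hφ hlcm σ hσ f g
end

section
/- Let X be a type. Define θ : FreeMonoid X → ((X × ℕ) →₀ ℕ) sending a word w of length d to Σ_{k=0}^{d−1} Finsupp.single (w_k, k+1) 1, where w_k is the k-th letter of w (θ maps the word x_{i_1}⋯x_{i_d} to the exponent vector of the letterplace monomial x_{i_1}(1)⋯x_{i_d}(d)). Then: (i) θ is injective; and (ii) θ (u * v) = θ u + Sh^[length u] (θ v) for all words u, v, where Sh is the shift homomorphism. (Hence w ↦ (θ w, length w) is an injective monoid homomorphism from the free monoid of words to the monoid of monomials of the skew letterplace algebra.) -/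
/-!
The value `θ w (x, k + 1)` is `1` exactly when the `k`-th letter of `w` is `x` (and `0`
otherwise), so `θ w` records `w` letter by letter and `θ` is injective. Prepending a letter gives
`θ (a · w) = e_(a,1) + Sh (θ w)`, from which the twisted multiplicativity follows by induction on
the left factor.
-/

/-- The shift homomorphism on the exponent monoid of the letterplace ring `K[X × ℕ]`:
the exponent map of the shift endomorphism `σ : x_i(j) ↦ x_i(j+1)`. -/
noncomputable def lpShift (X : Type*) : ((X × ℕ) →₀ ℕ) →+ ((X × ℕ) →₀ ℕ) :=
  Finsupp.mapDomain.addMonoidHom (fun p : X × ℕ => (p.1, p.2 + 1))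

/-- The letterplace map on words: the word `x_{i_1}⋯x_{i_d}` is sent to the exponent vector of
the letterplace monomial `x_{i_1}(1)⋯x_{i_d}(d)`. -/
noncomputable def lpTheta {X : Type*} (w : FreeMonoid X) : (X × ℕ) →₀ ℕ :=
  ∑ k : Fin (FreeMonoid.toList w).length,
    Finsupp.single ((FreeMonoid.toList w).get k, (k : ℕ) + 1) 1

section

variable {X : Type*}

lemma lpShift_single (x : X) (j n : ℕ) :
    lpShift X (Finsupp.single (x, j) n) = Finsupp.single (x, j + 1) n :=
  Finsupp.mapDomain_single

@[simp]
lemma lpTheta_one : lpTheta (1 : FreeMonoid X) = 0 := by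
  simp [lpTheta]

lemma lpTheta_of_mul (a : X) (w : FreeMonoid X) :
    lpTheta (.of a * w) = Finsupp.single (a, 1) 1 + lpShift X (lpTheta w) := by
  change ∑ k : Fin (w.toList.length + 1), _ = _
  rw [Fin.sum_univ_succ, lpTheta, map_sum]
  simp [lpShift_single]

lemma lpTheta_apply_succ [DecidableEq X] (w : FreeMonoid X) (x : X) (k : ℕ) :
    lpTheta w (x, k + 1) = if w.toList[k]? = some x then 1 else 0 := by
  simp only [lpTheta, Finsupp.finsetSum_apply, Finsupp.single_apply, Prod.mk.injEq, add_left_inj]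
  rcases lt_or_ge k w.toList.length with hk | hk
  · rw [Finset.sum_eq_single ⟨k, hk⟩]
    · simp [List.getElem?_eq_getElem hk, eq_comm]
    · intro i _ hi
      simp only [ne_eq, Fin.ext_iff] at hi
      simp [hi]
    · simp
  · rw [List.getElem?_eq_none hk]
    simp only [reduceCtorEq, if_false]
    exact Finset.sum_eq_zero fun i _ => if_neg fun h => (i.isLt.trans_le hk).ne h.2

lemma lpTheta_injective : Function.Injective (lpTheta (X := X)) := by
  classical
  intro u v h
  refine FreeMonoid.toList.injective (List.ext_getElem? fun k => Option.ext fun x => ?_)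
  have hx := DFunLike.congr_fun h (x, k + 1)
  simp only [lpTheta_apply_succ] at hx
  split_ifs at hx <;> simp_all

lemma lpTheta_mul (u v : FreeMonoid X) :
    lpTheta (u * v) = lpTheta u + (⇑(lpShift X))^[u.length] (lpTheta v) := by
  induction u using FreeMonoid.inductionOn' with
  | one => simp
  | of_mul a u ih =>
    rw [mul_assoc, lpTheta_of_mul, ih, map_add, lpTheta_of_mul, add_assoc, FreeMonoid.length_mul,
      FreeMonoid.length_of, Nat.add_comm 1, Function.iterate_succ_apply']

end

/-- **The letterplace map is an injective "twisted" homomorphism.** `θ` is injective and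
`θ(u·v) = θ(u) + σ^{|u|}(θ(v))`; hence `w ↦ (θ w, |w|)` is an injective monoid homomorphism
from words to the monomials of the skew letterplace algebra. -/
theorem lpTheta_injective_and_mul {X : Type*} :
    Function.Injective (lpTheta (X := X)) ∧
      ∀ u v : FreeMonoid X,
        lpTheta (u * v) = lpTheta u + (⇑(lpShift X))^[FreeMonoid.length u] (lpTheta v) :=
  ⟨lpTheta_injective, lpTheta_mul⟩
end

section
/- Let X be a type and let ≺ be a strict linear order (irreflexive, transitive, total) on (X →₀ ℕ) such that (i) no element is ≺ 0 (so 0, the monomial 1, is the least element), and (ii) for all m, n, t, m ≺ n implies t + m ≺ t + n (compatibility with multiplication of monomials). Then ≺ is well-founded (hence a monomial ordering) if and only if the restriction of ≺ to the set of variable exponent vectors { Finsupp.single x 1 : x ∈ X } is well-founded. -/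
/-! Since `≺` well-orders the variables, its reflexive closure is a well-quasi-order on them, so by
Higman's lemma every infinite sequence of words in the variables has terms `wᵢ`, `wⱼ` with `i < j`
such that `wᵢ` embeds letterwise-`≼` into a subword of `wⱼ`. Compatibility with addition and
minimality of `0` turn such an embedding into `mᵢ ≼ mⱼ` for the monomials `m = ∑ w`, and every
monomial is such a sum, so there is no infinite strictly descending sequence of monomials. -/

open Function Relation Set

section PartiallyWellOrdered

variable {α : Type*} {r : α → α → Prop}

theorem WellFounded.partiallyWellOrderedOn_reflGen [Std.Trichotomous r] (h : WellFounded r) :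
    (univ : Set α).PartiallyWellOrderedOn (ReflGen r) := by
  rw [partiallyWellOrderedOn_iff_exists_lt]
  intro f _
  obtain ⟨_, ⟨i, rfl⟩, hmin⟩ := h.has_min (range f) (range_nonempty f)
  refine ⟨i, i + 1, i.lt_succ_self, ?_⟩
  rcases trichotomous_of r (f i) (f (i + 1)) with hlt | heq | hgt
  · exact .single hlt
  · exact heq ▸ .refl
  · exact absurd hgt (hmin _ (mem_range_self _))

theorem wellFounded_of_partiallyWellOrderedOn_reflGen [IsStrictOrder α r]
    (h : (univ : Set α).PartiallyWellOrderedOn (ReflGen r)) : WellFounded r := by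
  rw [← wellFoundedOn_univ]
  refine h.wellFoundedOn.mono' fun a _ b _ hab => ⟨.single hab, ?_⟩
  rintro (_ | hba)
  · exact irrefl a hab
  · exact asymm hab hba

end PartiallyWellOrdered

section Monoid

variable {M ι : Type*} [AddCommMonoid M] {r : M → M → Prop}

theorem List.SublistForall₂.reflGen_sum_map [IsTrans M r] (hbot : ∀ m, ReflGen r 0 m)
    (hcompat : ∀ m n t, r m n → r (t + m) (t + n)) {f : ι → M} {l₁ l₂ : List ι}
    (h : List.SublistForall₂ (ReflGen (r on f)) l₁ l₂) :
    ReflGen r (l₁.map f).sum (l₂.map f).sum := by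
  have hcompat_refl : ∀ m n t, ReflGen r m n → ReflGen r (t + m) (t + n) := by
    rintro m n t (_ | hmn)
    exacts [.refl, .single (hcompat m n t hmn)]
  induction h with
  | nil => exact hbot _
  | @cons a b l₁ l₂ hab _ ih =>
    simp only [List.map_cons, List.sum_cons]
    refine _root_.trans (b := f b + (l₁.map f).sum) ?_ (hcompat_refl _ _ _ ih)
    have hab' : ReflGen r (f a) (f b) := by
      rcases hab with _ | hab
      exacts [.refl, .single hab]
    simpa only [add_comm _ (l₁.map f).sum] using hcompat_refl _ _ _ hab'
  | @cons_right b l₁ l₂ _ ih =>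
    refine _root_.trans ih ?_
    simpa only [List.map_cons, List.sum_cons, add_zero, add_comm (f b)] using
      hcompat_refl 0 (f b) (l₂.map f).sum (hbot _)

theorem wellFounded_of_wellFounded_on_generators [IsStrictOrder M r] (hbot : ∀ m, ReflGen r 0 m)
    (hcompat : ∀ m n t, r m n → r (t + m) (t + n)) {f : ι → M}
    (hgen : ∀ m, ∃ l : List ι, (l.map f).sum = m) [Std.Trichotomous (r on f)]
    (hwf : WellFounded (r on f)) : WellFounded r := by
  have hwords := hwf.partiallyWellOrderedOn_reflGen.partiallyWellOrderedOn_sublistForall₂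
  have hsum : (fun l => (l.map f).sum) '' {l : List ι | ∀ x ∈ l, x ∈ univ} = univ :=
    eq_univ_of_forall fun m => (hgen m).imp fun _ hl => ⟨fun _ _ => mem_univ _, hl⟩
  apply wellFounded_of_partiallyWellOrderedOn_reflGen
  rw [← hsum]
  exact hwords.image_of_monotone_on fun _ _ _ _ hl => hl.reflGen_sum_map hbot hcompat

end Monoid

theorem Finsupp.exists_list_sum_map_single {X : Type*} (m : X →₀ ℕ) :
    ∃ l : List X, (l.map (Finsupp.single · 1)).sum = m := by
  classical
  refine ⟨(Finsupp.toMultiset m).toList, Multiset.toFinsupp.symm.injective ?_⟩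
  simp [Multiset.toFinsupp_symm_apply, map_multiset_sum, Finsupp.toMultiset_single]

/-- **(Higman's lemma criterion for monomial orderings.)** A strict linear order on the
monomials of `K[X]` (with countably many variables allowed), compatible with multiplication
and with `1` as least element, is a well-ordering — i.e. a monomial ordering — if and only if
its restriction to the set of variables is a well-ordering. -/
theorem monomialOrdering_iff_wellFounded_on_variables {X : Type*}
    (r : (X →₀ ℕ) → (X →₀ ℕ) → Prop)
    (hirr : ∀ m, ¬ r m m)
    (htrans : ∀ m n t, r m n → r n t → r m t)
    (htotal : ∀ m n, m ≠ n → r m n ∨ r n m)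
    (hbot : ∀ m, ¬ r m 0)
    (hcompat : ∀ m n t : X →₀ ℕ, r m n → r (t + m) (t + n)) :
    WellFounded r ↔
      WellFounded (fun a b : {d : X →₀ ℕ // ∃ x : X, d = Finsupp.single x 1} =>
        r a.1 b.1) := by
  refine ⟨fun h => InvImage.wf Subtype.val h, fun h => ?_⟩
  have : IsStrictOrder (X →₀ ℕ) r := { irrefl := hirr, trans := htrans }
  have : Std.Trichotomous (r on (Finsupp.single · 1 : X → X →₀ ℕ)) :=
    ⟨fun x y hxy hyx => by_contra fun hne =>
      (htotal _ _ fun e => hne (Finsupp.single_left_injective one_ne_zero e)).elim hxy hyx⟩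
  have hzero : ∀ m, ReflGen r 0 m := fun m => by
    by_cases hm : m = 0
    · exact hm ▸ .refl
    · exact .single ((htotal 0 m (Ne.symm hm)).resolve_right (hbot m))
  exact wellFounded_of_wellFounded_on_generators hzero hcompat Finsupp.exists_list_sum_map_single
    (InvImage.wf (fun x => ⟨Finsupp.single x 1, x, rfl⟩) h)
end

section
/- Let K be a field, P = MvPolynomial ℕ K the ring of ordinary difference polynomials in the variables x(0), x(1), x(2), …, and for i ∈ ℕ let σ^i : P → P be the shift endomorphism MvPolynomial.rename (· + i), so σ^i (x(j)) = x(j+i). Set g₁ = x(2)·x(0) − x(1), g₂ = x(4)·x(1) − x(3)·x(0), g₃ = x(3)²·x(0) − x(3), g₄ = x(4)·x(3)·x(0) − x(4), g₅ = x(5) − x(4)·x(0). Then the ideal of P generated by { σ^i g₁ : i ∈ ℕ } equals the ideal generated by { σ^i g_t : i ∈ ℕ, t ∈ {1,2,3,4,5} }; in particular g₂, g₃, g₄, g₅ all belong to the difference ideal Σ-generated by g₁. -/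
/-!
A difference ideal is closed under the shift, so it contains the difference ideal generated by
any of its subsets; hence it suffices to show that `g₂, …, g₅` lie in the difference ideal of
`g₁`. Each of them is an explicit polynomial combination of shifts of `g₁` and of the
previously obtained `gₜ` (the S-polynomial reductions of the difference Buchberger algorithm);
the one for `g₅` uses the shift `σ g₄`.
-/

open MvPolynomial

variable (K : Type*) [Field K]

/-- `g₁ = x(2)x(0) − x(1)`, the generator of the difference ideal of Section 8. -/
noncomputable def diffG1 : MvPolynomial ℕ K := X 2 * X 0 - X 1

/-- The finite Gröbner difference basis
`g₁ = x(2)x(0) − x(1)`, `g₂ = x(4)x(1) − x(3)x(0)`, `g₃ = x(3)²x(0) − x(3)`,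
`g₄ = x(4)x(3)x(0) − x(4)`, `g₅ = x(5) − x(4)x(0)`. -/
noncomputable def diffBasis : Set (MvPolynomial ℕ K) :=
  {X 2 * X 0 - X 1, X 4 * X 1 - X 3 * X 0, X 3 ^ 2 * X 0 - X 3,
    X 4 * X 3 * X 0 - X 4, X 5 - X 4 * X 0}

section DifferenceIdeal

variable {R : Type*} [CommSemiring R]

noncomputable def differenceIdeal (G : Set (MvPolynomial ℕ R)) : Ideal (MvPolynomial ℕ R) :=
  Ideal.span (⋃ g ∈ G, Set.range fun i : ℕ => rename (· + i) g)

theorem rename_add_mem_differenceIdeal {G : Set (MvPolynomial ℕ R)} {g : MvPolynomial ℕ R}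
    (hg : g ∈ G) (i : ℕ) : rename (· + i) g ∈ differenceIdeal G :=
  Ideal.subset_span (Set.mem_biUnion hg ⟨i, rfl⟩)

theorem rename_add_rename_add (f : MvPolynomial ℕ R) (i j : ℕ) :
    rename (· + i) (rename (· + j) f) = rename (· + (j + i)) f := by
  rw [rename_rename]
  exact congrArg (rename · f) (funext fun n => Nat.add_assoc n j i)

theorem subset_differenceIdeal (G : Set (MvPolynomial ℕ R)) : G ⊆ differenceIdeal G := by
  intro g hg
  have h := rename_add_mem_differenceIdeal hg 0
  rwa [show (· + 0 : ℕ → ℕ) = id from rfl, rename_id_apply] at h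

theorem rename_add_mem_differenceIdeal_of_mem {G : Set (MvPolynomial ℕ R)}
    {f : MvPolynomial ℕ R} (hf : f ∈ differenceIdeal G) (i : ℕ) :
    rename (· + i) f ∈ differenceIdeal G := by
  suffices differenceIdeal G ≤ (differenceIdeal G).comap (rename (· + i)) from this hf
  rw [differenceIdeal, Ideal.span_le]
  intro p hp
  simp only [Set.mem_iUnion, Set.mem_range] at hp
  obtain ⟨g, hg, j, rfl⟩ := hp
  rw [SetLike.mem_coe, Ideal.mem_comap, rename_add_rename_add]
  exact rename_add_mem_differenceIdeal hg _

theorem differenceIdeal_le_iff {G H : Set (MvPolynomial ℕ R)} :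
    differenceIdeal H ≤ differenceIdeal G ↔ H ⊆ differenceIdeal G := by
  refine ⟨fun hle => (subset_differenceIdeal H).trans hle, fun hsub => ?_⟩
  rw [differenceIdeal, Ideal.span_le]
  intro p hp
  simp only [Set.mem_iUnion, Set.mem_range] at hp
  obtain ⟨g, hg, i, rfl⟩ := hp
  exact rename_add_mem_differenceIdeal_of_mem (hsub hg) i

theorem differenceIdeal_mono {G H : Set (MvPolynomial ℕ R)} (h : G ⊆ H) :
    differenceIdeal G ≤ differenceIdeal H :=
  differenceIdeal_le_iff.2 (h.trans (subset_differenceIdeal H))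

theorem differenceIdeal_singleton (g : MvPolynomial ℕ R) :
    differenceIdeal {g} = Ideal.span (Set.range fun i : ℕ => rename (· + i) g) := by
  simp [differenceIdeal]

end DifferenceIdeal

theorem diffBasis_subset_differenceIdeal_diffG1 :
    diffBasis K ⊆ differenceIdeal {diffG1 K} := by
  set I := differenceIdeal {diffG1 K}
  have σg₁ (i : ℕ) : rename (· + i) (diffG1 K) ∈ I :=
    rename_add_mem_differenceIdeal (Set.mem_singleton _) i
  have g₁ : diffG1 K ∈ I := subset_differenceIdeal _ (Set.mem_singleton _)
  have g₂ : X 4 * X 1 - X 3 * X 0 ∈ I := by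
    have e : (X 4 * X 1 - X 3 * X 0 : MvPolynomial ℕ K) =
        X 0 * rename (· + 2) (diffG1 K) - X 4 * diffG1 K := by
      simp [diffG1]; ring
    rw [e]
    exact sub_mem (I.mul_mem_left _ (σg₁ 2)) (I.mul_mem_left _ g₁)
  have g₃ : X 3 ^ 2 * X 0 - X 3 ∈ I := by
    have e : (X 3 ^ 2 * X 0 - X 3 : MvPolynomial ℕ K) =
        X 4 * X 3 * diffG1 K + X 4 * rename (· + 1) (diffG1 K)
          + (1 - X 3 * X 0) * rename (· + 2) (diffG1 K) := by
      simp [diffG1]; ring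
    rw [e]
    exact add_mem (add_mem (I.mul_mem_left _ g₁) (I.mul_mem_left _ (σg₁ 1)))
      (I.mul_mem_left _ (σg₁ 2))
  have g₄ : X 4 * X 3 * X 0 - X 4 ∈ I := by
    have e : (X 4 * X 3 * X 0 - X 4 : MvPolynomial ℕ K) =
        X 5 * (X 3 ^ 2 * X 0 - X 3) + (1 - X 3 * X 0) * rename (· + 3) (diffG1 K) := by
      simp [diffG1]; ring
    rw [e]
    exact add_mem (I.mul_mem_left _ g₃) (I.mul_mem_left _ (σg₁ 3))
  have g₅ : X 5 - X 4 * X 0 ∈ I := by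
    have e : (X 5 - X 4 * X 0 : MvPolynomial ℕ K) =
        X 5 * (X 4 * X 1 - X 3 * X 0) + X 0 * rename (· + 3) (diffG1 K)
          - rename (· + 1) (X 4 * X 3 * X 0 - X 4) := by
      simp [diffG1]; ring
    rw [e]
    exact sub_mem (add_mem (I.mul_mem_left _ g₂) (I.mul_mem_left _ (σg₁ 3)))
      (rename_add_mem_differenceIdeal_of_mem g₄ 1)
  rintro g (rfl | rfl | rfl | rfl | rfl)
  exacts [g₁, g₂, g₃, g₄, g₅]

/-- **(Section 8 example.)** The difference ideal `Σ`-generated by `g₁ = x(2)x(0) − x(1)` in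
the ring of ordinary difference polynomials equals the ideal generated by all shifts of
`g₁, …, g₅`; in particular `g₂, g₃, g₄, g₅` belong to the difference ideal generated
by `g₁`. -/
theorem difference_ideal_example :
    Ideal.span (Set.range fun i : ℕ => rename (· + i) (diffG1 K)) =
      Ideal.span (⋃ g ∈ diffBasis K, Set.range fun i : ℕ => rename (· + i) g) := by
  rw [← differenceIdeal_singleton]
  exact le_antisymm (differenceIdeal_mono (by simp [diffBasis, diffG1]))
    (differenceIdeal_le_iff.2 (diffBasis_subset_differenceIdeal_diffG1 K))
end
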